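/- Let s be a sequence and let i, j, k ∈ supp(s) be three distinct neurons with c_k(s) = 1 (neuron k spikes exactly once in s). Then b_{ik}(s)·(1 - b_{jk}(s)) ≤ b_{ij}(s) ≤ 1 - b_{jk}(s)·(1 - b_{ik}(s)). -/

import Mathlib

/-!
Split `s` at the single spike of `k` as `u ++ k :: v`. Then `b_{ik}` is the fraction of the
spikes of `i` that lie in `u`, and `1 - b_{jk}` the fraction of the spikes of `j` that lie in `v`;
every spike of `i` in `u` precedes every spike of `j` in `v`, which gives the lower bound.
Since `b_{ij} + b_{ji} = 1`, the upper bound is the lower bound with `i` and `j` exchanged.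
-/

open Finset

namespace NeuralSeq

/-- The bias count `c_{ij}(s)`: number of index pairs `k < k'` with `s_k = i` and `s_{k'} = j`. -/
def biasCount {n : ℕ} : List (Fin n) → Fin n → Fin n → ℕ
  | [], _, _ => 0
  | a :: t, i, j => (if a = i then t.count j else 0) + biasCount t i j

/-- The skew bias `β_{ij}(s)`. -/
noncomputable def skewBias {n : ℕ} (s : List (Fin n)) (i j : Fin n) : ℝ :=
  if 0 < s.count i ∧ 0 < s.count j then
    ((biasCount s i j : ℝ) - (biasCount s j i : ℝ)) / ((s.count i : ℝ) * (s.count j : ℝ))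
  else 0

/-- The skew-bias matrix `B_skew(s)`. -/
noncomputable def Bskew {n : ℕ} (s : List (Fin n)) : Matrix (Fin n) (Fin n) ℝ :=
  Matrix.of fun i j => skewBias s i j

/-- The probability bias `b_{ij}(s)` (meaningful when `i, j ∈ supp(s)`). -/
noncomputable def probBias {n : ℕ} (s : List (Fin n)) (i j : Fin n) : ℝ :=
  (biasCount s i j : ℝ) / ((s.count i : ℝ) * (s.count j : ℝ))

/-- The (unnormalized) center of mass `com_i(s)`, with 1-based indexing. -/
noncomputable def com {n : ℕ} (s : List (Fin n)) (i : Fin n) : ℝ :=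
  if 0 < s.count i then
    (∑ k : Fin s.length, if s.get k = i then ((k : ℕ) + 1 : ℝ) else 0) / (s.count i : ℝ)
  else ((s.length : ℝ) + 1) / 2

/-- The normalized center of mass `γ_i(s)`. -/
noncomputable def gamma {n : ℕ} (s : List (Fin n)) (i : Fin n) : ℝ :=
  (2 * com s i - 1) / (s.length : ℝ) - 1

/-- The firing rate `ρ_i(s)`. -/
noncomputable def rate {n : ℕ} (s : List (Fin n)) (i : Fin n) : ℝ :=
  (s.count i : ℝ) / (s.length : ℝ)

/-- A sequence is pure if for every pair of distinct active neurons, all spikes of one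
precede all spikes of the other (equivalently, `c_{ij}(s) = 0` or `c_{ji}(s) = 0`). -/
def IsPure {n : ℕ} (s : List (Fin n)) : Prop :=
  ∀ i j : Fin n, i ≠ j → 0 < s.count i → 0 < s.count j →
    biasCount s i j = 0 ∨ biasCount s j i = 0

/-- The subsequence `s_I` of `s` given by an index set `I`. -/
def subseqOf {n : ℕ} (s : List (Fin n)) (I : Finset (Fin s.length)) : List (Fin n) :=
  ((List.finRange s.length).filter (fun k => decide (k ∈ I))).map s.get

/-- The shuffling `s^π` of `s` by a permutation `π` of its index set. -/
def shuffle {n : ℕ} (s : List (Fin n)) (π : Equiv.Perm (Fin s.length)) : List (Fin n) :=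
  (List.finRange s.length).map (fun k => s.get (π k))

/-- The order-`m` bias count `c_v(s)`: the number of subsequences of `s` equal to `v`. -/
def orderCount {n : ℕ} : List (Fin n) → List (Fin n) → ℕ
  | _, [] => 1
  | [], _ :: _ => 0
  | a :: t, v :: vs => (if a = v then orderCount t vs else 0) + orderCount t (v :: vs)

theorem biasCount_eq_zero_of_notMem {n : ℕ} {s : List (Fin n)} {j : Fin n} (hj : j ∉ s)
    (i : Fin n) : biasCount s i j = 0 := by
  induction s with
  | nil => rfl
  | cons a t ih =>
    rw [List.mem_cons, not_or] at hj
    simp [biasCount, ih hj.2, List.count_eq_zero.2 hj.2]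

theorem biasCount_append {n : ℕ} (u v : List (Fin n)) (i j : Fin n) :
    biasCount (u ++ v) i j = biasCount u i j + biasCount v i j + u.count i * v.count j := by
  induction u with
  | nil => simp [biasCount]
  | cons a t ih =>
    by_cases h : a = i
    · simp only [h, List.cons_append, biasCount, ↓reduceIte, List.count_append, ih,
        List.count_cons_self]
      ring
    · simp [biasCount, ih, h, List.count_cons_of_ne h]

theorem count_mul_count_le_biasCount_append {n : ℕ} (u v : List (Fin n)) (i j : Fin n) :
    u.count i * v.count j ≤ biasCount (u ++ v) i j := by
  rw [biasCount_append]
  exact Nat.le_add_left _ _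

theorem biasCount_add_biasCount {n : ℕ} (s : List (Fin n)) {i j : Fin n} (hij : i ≠ j) :
    biasCount s i j + biasCount s j i = s.count i * s.count j := by
  induction s with
  | nil => rfl
  | cons a t ih =>
    by_cases hi : a = i
    · subst hi
      simp only [biasCount, ↓reduceIte, hij, zero_add, List.count_cons_self,
        List.count_cons_of_ne hij]
      linarith
    · by_cases hj : a = j
      · subst hj
        simp only [biasCount, hi, ↓reduceIte, zero_add, List.count_cons_of_ne hi,
          List.count_cons_self]
        linarith
      · simp [biasCount, hi, hj, List.count_cons_of_ne hi, List.count_cons_of_ne hj, ih]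

theorem probBias_add_probBias {n : ℕ} (s : List (Fin n)) {i j : Fin n} (hij : i ≠ j)
    (hi : 0 < s.count i) (hj : 0 < s.count j) :
    probBias s i j + probBias s j i = 1 := by
  have hpos : (0 : ℝ) < s.count i * s.count j := by positivity
  rw [probBias, probBias, mul_comm (s.count j : ℝ), ← add_div, div_eq_one_iff_eq hpos.ne',
    ← Nat.cast_add, biasCount_add_biasCount s hij, Nat.cast_mul]

theorem exists_eq_append_cons_of_count_eq_one {α : Type*} [BEq α] [LawfulBEq α] {s : List α}
    {k : α} (hk : s.count k = 1) : ∃ u v, s = u ++ k :: v ∧ k ∉ u ∧ k ∉ v := by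
  have hks : k ∈ s := List.count_pos_iff.1 (by omega)
  obtain ⟨u, v, rfl⟩ := List.append_of_mem hks
  rw [List.count_append, List.count_cons_self] at hk
  exact ⟨u, v, rfl, List.count_eq_zero.1 (by omega), List.count_eq_zero.1 (by omega)⟩

theorem probBias_append_cons {n : ℕ} {u v : List (Fin n)} {k : Fin n}
    (hu : k ∉ u) (hv : k ∉ v) {i : Fin n} (hik : i ≠ k) :
    probBias (u ++ k :: v) i k = u.count i / (u.count i + v.count i) := by
  have hkv : biasCount (k :: v) i k = 0 := by
    simp [biasCount, Ne.symm hik, biasCount_eq_zero_of_notMem hv]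
  simp [probBias, biasCount_append, biasCount_eq_zero_of_notMem hu, hkv,
    List.count_eq_zero.2 hu, List.count_eq_zero.2 hv, List.count_cons_of_ne (Ne.symm hik)]

theorem probBias_mul_one_sub_probBias_le {n : ℕ} {s : List (Fin n)} {i j k : Fin n}
    (hik : i ≠ k) (hjk : j ≠ k) (hj : 0 < s.count j) (hk : s.count k = 1) :
    probBias s i k * (1 - probBias s j k) ≤ probBias s i j := by
  obtain ⟨u, v, rfl, hu, hv⟩ := exists_eq_append_cons_of_count_eq_one hk
  have hcount (l : Fin n) (hl : l ≠ k) : (u ++ k :: v).count l = u.count l + v.count l := by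
    rw [List.count_append, List.count_cons_of_ne (Ne.symm hl)]
  have hj' : (0 : ℝ) < u.count j + v.count j := by exact_mod_cast hcount j hjk ▸ hj
  have hafter :
      1 - (u.count j : ℝ) / (u.count j + v.count j) = v.count j / (u.count j + v.count j) := by
    field_simp
    ring
  calc probBias (u ++ k :: v) i k * (1 - probBias (u ++ k :: v) j k)
      = (u.count i * (k :: v).count j : ℕ) / ((u ++ k :: v).count i * (u ++ k :: v).count j) := by
        rw [probBias_append_cons hu hv hik, probBias_append_cons hu hv hjk, hcount i hik,
          hcount j hjk, List.count_cons_of_ne (Ne.symm hjk), hafter, div_mul_div_comm]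
        push_cast
        rfl
    _ ≤ probBias (u ++ k :: v) i j := by
        unfold probBias
        gcongr
        exact count_mul_count_le_biasCount_append u (k :: v) i j

end NeuralSeq

open NeuralSeq in
/-- if `k` spikes exactly once, then
`b_ik (1 - b_jk) ≤ b_ij ≤ 1 - b_jk (1 - b_ik)`. -/
theorem probBias_single_spike_bounds {n : ℕ} (s : List (Fin n)) (i j k : Fin n)
    (hij : i ≠ j) (hjk : j ≠ k) (hik : i ≠ k)
    (hi : 0 < s.count i) (hj : 0 < s.count j) (hk : s.count k = 1) :
    probBias s i k * (1 - probBias s j k) ≤ probBias s i j ∧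
      probBias s i j ≤ 1 - probBias s j k * (1 - probBias s i k) := by
  refine ⟨probBias_mul_one_sub_probBias_le hik hjk hj hk, ?_⟩
  have hji := probBias_mul_one_sub_probBias_le hjk hik hi hk
  linarith [probBias_add_probBias s hij hi hj]
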